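/- arXiv:1002.4442 — 4 statements merged into one kernel-verified Lean document; each statement's English description precedes it below -/
import Mathlib

section
/- The formal power series 𝓜_m(x) = ∑_{p≥0} M_p^(m) x^p satisfies the functional equation 𝓜_m(x) = 1 + x · 𝓜_m(x)^(m+1). -/
open Finset PowerSeries

/-- Raney numbers `R q n k = k/(qn+k) * C(qn+k, n)` (with `R q n 0 = δ_{n0}`), as rationals. -/
noncomputable def raney (q n k : ℕ) : ℚ :=
  if k = 0 then (if n = 0 then 1 else 0)
  else (k : ℚ) * (((q * n + k).choose n : ℕ) : ℚ) / ((q * n + k : ℕ) : ℚ)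

lemma raney_zero_left (q k : ℕ) (hk : k ≠ 0) : raney q 0 k = 1 := by
  simp only [raney, if_neg hk, Nat.mul_zero, Nat.zero_add, Nat.choose_zero_right, Nat.cast_one,
    mul_one]
  rw [div_self]
  exact_mod_cast hk

lemma raney_rec (q n k : ℕ) (hq : 1 ≤ q) :
    raney q (n + 1) (k + 1) = raney q (n + 1) k + raney q n (k + q) := by
  have hNpos : 0 < q * n + q + k := by positivity
  have hnN : n ≤ q * n + q + k := by
    have := Nat.le_mul_of_pos_left n hq; omega
  have hNQ : ((q * n + q + k : ℕ) : ℚ) ≠ 0 := by exact_mod_cast hNpos.ne'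
  have hN1 : (((q * n + q + k : ℕ) : ℚ) + 1) ≠ 0 := by positivity
  have hkey : ((q * n + q + k).choose (n + 1) : ℚ) * (n + 1) =
      ((q * n + q + k).choose n : ℚ) * (((q * n + q + k : ℕ) : ℚ) - n) := by
    have h2 : (((q * n + q + k) - n : ℕ) : ℚ) = ((q * n + q + k : ℕ) : ℚ) - n :=
      Nat.cast_sub hnN
    calc ((q * n + q + k).choose (n + 1) : ℚ) * (n + 1)
        = (((q * n + q + k).choose (n + 1) * (n + 1) : ℕ) : ℚ) := by push_cast; ring
      _ = (((q * n + q + k).choose n * ((q * n + q + k) - n) : ℕ) : ℚ) := by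
          rw [Nat.choose_succ_right_eq]
      _ = _ := by rw [Nat.cast_mul, h2]
  have hP : ((q * n + q + k + 1).choose (n + 1) : ℚ) =
      ((q * n + q + k).choose n : ℚ) + ((q * n + q + k).choose (n + 1) : ℚ) := by
    rw [Nat.choose_succ_succ]; push_cast; ring
  have e1 : q * (n + 1) + (k + 1) = q * n + q + k + 1 := by rw [Nat.mul_succ]; omega
  have e2 : q * (n + 1) + k = q * n + q + k := by rw [Nat.mul_succ]
  have e3 : q * n + (k + q) = q * n + q + k := by omega
  have hNc : ((q * n + q + k : ℕ) : ℚ) = (q : ℚ) * n + q + k := by push_cast; ring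
  rcases Nat.eq_zero_or_pos k with rfl | hk
  · simp only [raney, if_neg (Nat.succ_ne_zero 0), if_neg (Nat.succ_ne_zero n),
      if_neg (by omega : ¬ 0 + q = 0), e1, e3, if_pos rfl]
    simp only [Nat.add_zero, if_true] at hNQ hN1 hkey hP ⊢
    rw [hP]
    simp only [zero_add, Nat.zero_add]
    have hd1 : ((q * n + q + 1 : ℕ) : ℚ) ≠ 0 := by
      have : 0 < q * n + q + 1 := by positivity
      exact_mod_cast this.ne'
    rw [div_eq_div_iff hd1 hNQ]
    push_cast at hkey ⊢
    linear_combination (q : ℚ) * hkey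
  · simp only [raney, if_neg (by omega : ¬ k + 1 = 0), if_neg (by omega : ¬ k = 0),
      if_neg (by omega : ¬ k + q = 0), e1, e2, e3]
    rw [hP, ← add_div]
    have hd1 : ((q * n + q + k + 1 : ℕ) : ℚ) ≠ 0 := by
      have : 0 < q * n + q + k + 1 := by positivity
      exact_mod_cast this.ne'
    rw [div_eq_div_iff hd1 hNQ]
    push_cast at hkey ⊢
    linear_combination (q : ℚ) * hkey

lemma raney_conv (q : ℕ) (hq : 1 ≤ q) : ∀ n k : ℕ,
    (∑ i ∈ Finset.range (n + 1), raney q i 1 * raney q (n - i) k) = raney q n (k + 1) := by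
  intro n
  induction n using Nat.strong_induction_on with
  | _ n ihn =>
    intro k
    induction k with
    | zero =>
      rw [Finset.sum_eq_single n]
      · simp [raney]
      · intro i _ hne
        have hi : n - i ≠ 0 := by
          rcases Finset.mem_range.mp ‹i ∈ Finset.range (n+1)› with h
          omega
        simp [raney, hi]
      · intro h; exact absurd (Finset.self_mem_range_succ n) h
    | succ k ihk =>
      rcases Nat.eq_zero_or_pos n with rfl | hn
      · rw [Finset.sum_range_one, raney_zero_left q 1 one_ne_zero, one_mul,
          raney_zero_left q (k+1) (Nat.succ_ne_zero k),
          raney_zero_left q (k+1+1) (Nat.succ_ne_zero _)]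
      · obtain ⟨n', rfl⟩ : ∃ n', n = n' + 1 := ⟨n - 1, by omega⟩
        have hsplit : ∀ i ∈ Finset.range (n' + 1),
            raney q i 1 * raney q (n' + 1 - i) (k + 1) =
              raney q i 1 * raney q (n' + 1 - i) k + raney q i 1 * raney q (n' - i) (k + q) := by
          intro i hi
          have hi' : i ≤ n' := by exact Nat.lt_succ_iff.mp (Finset.mem_range.mp hi)
          have h1 : n' + 1 - i = (n' - i) + 1 := by omega
          rw [h1, raney_rec q (n' - i) k hq, mul_add]
        rw [Finset.sum_range_succ, Finset.sum_congr rfl hsplit, Finset.sum_add_distrib]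
        have hOuter : (∑ i ∈ Finset.range (n' + 1), raney q i 1 * raney q (n' - i) (k + q)) =
            raney q n' (k + q + 1) := ihn n' (Nat.lt_succ_self _) (k + q)
        have hInner : (∑ i ∈ Finset.range (n' + 1 + 1), raney q i 1 * raney q (n' + 1 - i) k) =
            raney q (n' + 1) (k + 1) := ihk
        rw [Finset.sum_range_succ] at hInner
        have hR0 : raney q 0 (k + 1) = raney q 0 k := by
          rcases Nat.eq_zero_or_pos k with rfl | hk
          · rw [raney_zero_left q 1 one_ne_zero]; simp [raney]
          · rw [raney_zero_left q (k+1) (Nat.succ_ne_zero k), raney_zero_left q k hk.ne']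
        rw [Nat.sub_self] at hInner ⊢
        rw [hR0, hOuter]
        rw [add_right_comm, hInner, raney_rec q n' (k + 1) hq]
        ring_nf

lemma coeff_raney_pow (q : ℕ) (hq : 1 ≤ q) (k : ℕ) : ∀ n : ℕ,
    PowerSeries.coeff n ((PowerSeries.mk fun p => raney q p 1) ^ k) = raney q n k := by
  induction k with
  | zero =>
    intro n
    rw [pow_zero, PowerSeries.coeff_one]
    simp [raney]
  | succ k ih =>
    intro n
    rw [pow_succ', PowerSeries.coeff_mul,
      Finset.Nat.sum_antidiagonal_eq_sum_range_succ_mk]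
    simp only [PowerSeries.coeff_mk, ih]
    exact raney_conv q hq n k

lemma fc_eq_raney (m p : ℕ) :
    ((Nat.choose (m * p + p) p / (m * p + 1) : ℕ) : ℚ) = raney (m + 1) p 1 := by
  have hkey : (m * p + p).choose p * (m * p + p + 1) =
      (m * p + p + 1).choose p * (m * p + 1) := by
    have := Nat.choose_mul_succ_eq (m * p + p) p
    have h : m * p + p + 1 - p = m * p + 1 := by omega
    rwa [h] at this
  have hco : Nat.Coprime (m * p + 1) (m * p + p + 1) := by
    have h1 : Nat.Coprime p (m * p + 1) := by
      rw [Nat.coprime_mul_right_add_right]; exact Nat.coprime_one_right p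
    have h2 : m * p + p + 1 = p + (m * p + 1) := by omega
    rw [h2, Nat.coprime_add_self_right]
    exact h1.symm
  have hdvd : (m * p + 1) ∣ (m * p + p).choose p := by
    apply hco.dvd_of_dvd_mul_right
    exact ⟨(m * p + p + 1).choose p, by rw [hkey]; ring⟩
  have hne : ((m * p + 1 : ℕ) : ℚ) ≠ 0 := by
    exact_mod_cast (Nat.succ_ne_zero (m * p))
  have hne2 : (((m + 1) * p + 1 : ℕ) : ℚ) ≠ 0 := by
    exact_mod_cast (Nat.succ_ne_zero ((m + 1) * p))
  rw [Nat.cast_div hdvd hne]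
  rw [raney, if_neg one_ne_zero]
  have harg : (m + 1) * p + 1 = m * p + p + 1 := by ring_nf
  rw [harg] at hne2 ⊢
  rw [Nat.cast_one, one_mul, div_eq_div_iff hne hne2]
  exact_mod_cast hkey

/-- The generating function `𝓜_m(x) = ∑_p M_p^(m) x^p` of the Fuss–Catalan numbers,
as a formal power series over `ℚ`, satisfies `𝓜_m = 1 + X · 𝓜_m^(m+1)`. -/
theorem fussCatalan_generatingFunction_eq (m : ℕ) (hm : 1 ≤ m) :
    (PowerSeries.mk fun p : ℕ =>
        ((Nat.choose (m * p + p) p / (m * p + 1) : ℕ) : ℚ)) =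
      1 + PowerSeries.X *
        (PowerSeries.mk fun p : ℕ =>
          ((Nat.choose (m * p + p) p / (m * p + 1) : ℕ) : ℚ)) ^ (m + 1) := by
  have hq : 1 ≤ m + 1 := Nat.le_add_left 1 m
  have hfun : (PowerSeries.mk fun p : ℕ =>
      ((Nat.choose (m * p + p) p / (m * p + 1) : ℕ) : ℚ)) =
      PowerSeries.mk fun p => raney (m + 1) p 1 :=
    congrArg _ (funext fun p => fc_eq_raney m p)
  rw [hfun]
  ext n
  rw [map_add, PowerSeries.coeff_mk]
  cases n with
  | zero =>
    rw [PowerSeries.coeff_one, if_pos rfl]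
    rw [PowerSeries.coeff_zero_eq_constantCoeff, map_mul, PowerSeries.constantCoeff_X,
      zero_mul, raney_zero_left (m+1) 1 one_ne_zero]
    norm_num
  | succ n =>
    rw [PowerSeries.coeff_one, if_neg (Nat.succ_ne_zero n), PowerSeries.coeff_succ_X_mul,
      coeff_raney_pow (m+1) hq (m+1) n, zero_add]
    have h := raney_rec (m + 1) n 0 hq
    have h0 : raney (m + 1) (n + 1) 0 = 0 := by simp [raney]
    rw [h0] at h
    rw [h]
    norm_num
end

section
/- There is exactly one (m,1)-regular path up to the induced partition of indices: for a closed path (i_0, ..., i_{2m}) of length 2m with i_{2m} = i_0 whose graph is (m,1)-regular (m+1 distinct indices, every edge doubled), one has i_k = i_l if and only if k + l = 2m (indices taken in {0,...,2m-1} together with i_{2m}=i_0). -/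
private def RPfv (i : ℕ → ℕ) (s : ℕ) : ℕ := Nat.find (⟨s, rfl⟩ : ∃ j, i j = i s)

private lemma RPfv_spec (i : ℕ → ℕ) (s : ℕ) : i (RPfv i s) = i s :=
  Nat.find_spec (⟨s, rfl⟩ : ∃ j, i j = i s)

private lemma RPfv_le (i : ℕ → ℕ) (s : ℕ) : RPfv i s ≤ s := Nat.find_le rfl

private lemma RPfv_min {i : ℕ → ℕ} {s t : ℕ} (h : i t = i s) : RPfv i s ≤ t :=
  Nat.find_le h

private lemma RPfv_congr {i : ℕ → ℕ} {s t : ℕ} (h : i s = i t) : RPfv i s = RPfv i t := by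
  apply le_antisymm
  · exact Nat.find_le ((RPfv_spec i t).trans h.symm)
  · exact Nat.find_le ((RPfv_spec i s).trans h)

private lemma RPfv_fv (i : ℕ → ℕ) (s : ℕ) : RPfv i (RPfv i s) = RPfv i s :=
  RPfv_congr (RPfv_spec i s)

private def RPpar (i : ℕ → ℕ) (k : ℕ) : ℕ := RPfv i (k - 1)

private lemma RPpar_le (i : ℕ → ℕ) (k : ℕ) : RPpar i k ≤ k :=
  (RPfv_le i (k-1)).trans (Nat.sub_le k 1)

private lemma RPiter_le (i : ℕ → ℕ) : ∀ j k, (RPpar i)^[j] k ≤ k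
  | 0, _ => le_rfl
  | (j+1), k => by
      rw [Function.iterate_succ_apply]
      exact (RPiter_le i j (RPpar i k)).trans (RPpar_le i k)

private def RPanc (i : ℕ → ℕ) (a k : ℕ) : Prop := ∃ j, (RPpar i)^[j] k = a

private lemma RPanc_le {i : ℕ → ℕ} {a k : ℕ} (h : RPanc i a k) : a ≤ k := by
  obtain ⟨j, hj⟩ := h
  exact hj ▸ RPiter_le i j k

private lemma RPanc_refl (i : ℕ → ℕ) (a : ℕ) : RPanc i a a := ⟨0, rfl⟩

private lemma RPanc_iff (i : ℕ → ℕ) (a k : ℕ) :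
    RPanc i a k ↔ k = a ∨ RPanc i a (RPpar i k) := by
  constructor
  · rintro ⟨j, hj⟩
    cases j with
    | zero => exact Or.inl hj
    | succ j => exact Or.inr ⟨j, by rwa [Function.iterate_succ_apply] at hj⟩
  · rintro (rfl | ⟨j, hj⟩)
    · exact ⟨0, rfl⟩
    · exact ⟨j+1, by rwa [Function.iterate_succ_apply]⟩

private lemma RPnot_anc_par (i : ℕ → ℕ) {a : ℕ} (ha : a ≠ 0) : ¬ RPanc i a (RPpar i a) := by
  intro h
  have h1 : a ≤ RPpar i a := RPanc_le h
  have h2 : RPpar i a < a := lt_of_le_of_lt (RPfv_le i (a-1)) (by omega)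
  omega

open Classical in
private noncomputable def RPchi (i : ℕ → ℕ) (a s : ℕ) : ℤ :=
  if RPanc i a (RPfv i s) then 1 else 0

private lemma RPchi_congr {i : ℕ → ℕ} (a : ℕ) {s t : ℕ} (h : i s = i t) :
    RPchi i a s = RPchi i a t := by
  unfold RPchi
  rw [RPfv_congr h]

/-- Uniqueness of the `(m,1)`-regular path: for a closed path `(i_0,…,i_{2m})` of length
`2m` with `i_{2m} = i_0`, exactly `m+1` distinct index values, and every spun edge
occurring exactly twice (spin `+` for `j < m`, spin `−` for `j ≥ m`), one has
`i_k = i_l` if and only if `k = l` or `k + l = 2m`. -/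
theorem regular_path_m_one (m : ℕ) (hm : 1 ≤ m) (i : ℕ → ℕ)
    (hclosed : i (2 * m) = i 0)
    (hdist : ((Finset.range (2 * m)).image i).card = m + 1)
    (hdouble : ∀ j ∈ Finset.range (2 * m),
      ((Finset.range (2 * m)).filter fun k =>
        (if k % (2 * m) < m then (i k, i (k + 1)) else (i (k + 1), i k)) =
          (if j % (2 * m) < m then (i j, i (j + 1)) else (i (j + 1), i j))).card = 2) :
    ∀ k l : ℕ, k ≤ 2 * m → l ≤ 2 * m → (i k = i l ↔ (k = l ∨ k + l = 2 * m)) := by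
  classical
  set E : ℕ → ℕ × ℕ := fun k => if k < m then (i k, i (k + 1)) else (i (k + 1), i k) with hE
  have hElt : ∀ k, k < m → E k = (i k, i (k+1)) := fun k hk => by simp [hE, hk]
  have hEge : ∀ k, m ≤ k → E k = (i (k+1), i k) := fun k hk => by
    simp [hE, Nat.not_lt.mpr hk]
  -- restated doubling hypothesis
  have hD : ∀ j ∈ Finset.range (2*m),
      ((Finset.range (2*m)).filter fun k => E k = E j).card = 2 := by
    intro j hj
    have h2 := hdouble j hj
    rw [Finset.mem_range] at hj
    have hfeq : Finset.filter (fun k => E k = E j) (Finset.range (2*m)) =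
        Finset.filter (fun k =>
          (if k % (2 * m) < m then (i k, i (k + 1)) else (i (k + 1), i k)) =
            (if j % (2 * m) < m then (i j, i (j + 1)) else (i (j + 1), i j)))
          (Finset.range (2*m)) := by
      apply Finset.filter_congr
      intro k hk
      rw [Finset.mem_range] at hk
      simp only [hE, Nat.mod_eq_of_lt hk, Nat.mod_eq_of_lt hj]
    rw [hfeq]
    exact h2
  -- the set of first-visit steps
  set N : Finset ℕ := (Finset.range (2*m)).filter (fun k => RPfv i k = k) with hN
  have hmemN : ∀ k, k ∈ N ↔ k < 2*m ∧ RPfv i k = k := by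
    intro k; rw [hN, Finset.mem_filter, Finset.mem_range]
  have h0N : 0 ∈ N := by
    rw [hmemN]; exact ⟨by omega, Nat.le_zero.mp (RPfv_le i 0)⟩
  have hNcard : N.card = m + 1 := by
    have himg : Finset.image i N = Finset.image i (Finset.range (2*m)) := by
      apply Finset.Subset.antisymm
      · exact Finset.image_subset_image (Finset.filter_subset _ _)
      · intro v hv
        rw [Finset.mem_image] at hv ⊢
        obtain ⟨s, hs, rfl⟩ := hv
        rw [Finset.mem_range] at hs
        refine ⟨RPfv i s, ?_, RPfv_spec i s⟩
        rw [hmemN]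
        exact ⟨lt_of_le_of_lt (RPfv_le i s) hs, RPfv_fv i s⟩
    have hiinj : Set.InjOn i ↑N := by
      intro a ha b hb hab
      rw [Finset.mem_coe, hmemN] at ha hb
      have := RPfv_congr hab
      omega
    calc N.card = (Finset.image i N).card := (Finset.card_image_of_injOn hiinj).symm
    _ = m + 1 := by rw [himg, hdist]
  -- the set of spun edge values has cardinality m
  set F : Finset (ℕ × ℕ) := (Finset.range (2*m)).image E with hF
  have hFcard : F.card = m := by
    have h1 : (Finset.range (2*m)).card
        = ∑ b ∈ F, ((Finset.range (2*m)).filter fun k => E k = b).card :=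
      Finset.card_eq_sum_card_image E _
    rw [Finset.card_range] at h1
    have h2 : ∀ b ∈ F, ((Finset.range (2*m)).filter fun k => E k = b).card = 2 := by
      intro b hb
      rw [hF, Finset.mem_image] at hb
      obtain ⟨j, hj, rfl⟩ := hb
      exact hD j hj
    rw [Finset.sum_congr rfl h2, Finset.sum_const, smul_eq_mul] at h1
    omega
  -- orientation-insensitive component matching
  have hcomp : ∀ s t, E s = E t →
      (i s = i t ∧ i (s+1) = i (t+1)) ∨ (i s = i (t+1) ∧ i (s+1) = i t) := by
    intro s t h
    rcases lt_or_ge s m with hs | hs <;> rcases lt_or_ge t m with ht | ht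
    · rw [hElt s hs, hElt t ht, Prod.mk.injEq] at h; exact Or.inl h
    · rw [hElt s hs, hEge t ht, Prod.mk.injEq] at h; exact Or.inr h
    · rw [hEge s hs, hElt t ht, Prod.mk.injEq] at h; exact Or.inr ⟨h.2, h.1⟩
    · rw [hEge s hs, hEge t ht, Prod.mk.injEq] at h; exact Or.inl ⟨h.2, h.1⟩
  -- every spun edge value arises from a first-entry step
  have hsurj : ∀ s, s < 2*m → ∃ k, k ∈ N ∧ k ≠ 0 ∧ E (k-1) = E s := by
    have hsub : (N.erase 0).image (fun k => E (k-1)) ⊆ F := by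
      intro b hb
      rw [Finset.mem_image] at hb
      obtain ⟨k, hk, rfl⟩ := hb
      obtain ⟨hk0, hkN⟩ := Finset.mem_erase.mp hk
      rw [hmemN] at hkN
      rw [hF, Finset.mem_image]
      exact ⟨k-1, Finset.mem_range.mpr (by omega), rfl⟩
    have hginj : Set.InjOn (fun k => E (k-1)) ↑(N.erase 0) := by
      intro a ha b hb hab
      rw [Finset.mem_coe, Finset.mem_erase, hmemN] at ha hb
      simp only at hab
      have ha1 : a - 1 + 1 = a := by omega
      have hb1 : b - 1 + 1 = b := by omega
      rcases hcomp (a-1) (b-1) hab with ⟨h1, h2⟩ | ⟨h1, h2⟩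
      · rw [ha1, hb1] at h2
        have := RPfv_congr h2
        omega
      · rw [hb1] at h1
        rw [ha1] at h2
        have hfb : RPfv i b ≤ a - 1 := RPfv_min h1
        have hfa : RPfv i a ≤ b - 1 := RPfv_min h2.symm
        omega
    have hcard : ((N.erase 0).image (fun k => E (k-1))).card = m := by
      rw [Finset.card_image_of_injOn hginj, Finset.card_erase_of_mem h0N, hNcard]
      omega
    have heq : (N.erase 0).image (fun k => E (k-1)) = F :=
      Finset.eq_of_subset_of_card_le hsub (by rw [hcard, hFcard])
    intro s hs
    have hmem : E s ∈ F := by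
      rw [hF]; exact Finset.mem_image_of_mem E (Finset.mem_range.mpr hs)
    rw [← heq, Finset.mem_image] at hmem
    obtain ⟨k, hk, hEk⟩ := hmem
    obtain ⟨hk0, hkN⟩ := Finset.mem_erase.mp hk
    exact ⟨k, hkN, hk0, hEk⟩
  -- endpoints of a step, at the level of first-visit times
  have hendp : ∀ s k, k ∈ N → k ≠ 0 → E s = E (k-1) →
      (RPfv i s = RPpar i k ∧ RPfv i (s+1) = k) ∨
      (RPfv i s = k ∧ RPfv i (s+1) = RPpar i k) := by
    intro s k hkN hk0 h
    have hk1 : k - 1 + 1 = k := by omega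
    have hfvk : RPfv i k = k := ((hmemN k).mp hkN).2
    rcases hcomp s (k-1) h with ⟨h1, h2⟩ | ⟨h1, h2⟩
    · left
      constructor
      · show RPfv i s = RPfv i (k-1)
        exact RPfv_congr h1
      · rw [hk1] at h2; rw [RPfv_congr h2, hfvk]
    · right
      constructor
      · rw [hk1] at h1; rw [RPfv_congr h1, hfvk]
      · show RPfv i (s+1) = RPfv i (k-1)
        exact RPfv_congr h2
  -- steps not traversing the entering edge of `a` do not change the potential
  have hcross0 : ∀ a s, a ∈ N → a ≠ 0 → s < 2*m → ¬ (E s = E (a-1)) →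
      RPchi i a (s+1) - RPchi i a s = 0 := by
    intro a s haN ha0 hs hne
    obtain ⟨k, hkN, hk0, hEk⟩ := hsurj s hs
    have hka : ¬ (k = a) := by rintro rfl; exact hne hEk.symm
    have hiff : RPanc i a k ↔ RPanc i a (RPpar i k) := by
      rw [RPanc_iff i a k]; simp [hka]
    rcases hendp s k hkN hk0 hEk.symm with ⟨h1, h2⟩ | ⟨h1, h2⟩
    · unfold RPchi
      rw [h1, h2]
      by_cases h : RPanc i a k
      · rw [if_pos h, if_pos (hiff.mp h)]; ring
      · rw [if_neg h, if_neg (fun hc => h (hiff.mpr hc))]; ring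
    · unfold RPchi
      rw [h1, h2]
      by_cases h : RPanc i a k
      · rw [if_pos h, if_pos (hiff.mp h)]; ring
      · rw [if_neg h, if_neg (fun hc => h (hiff.mpr hc))]; ring
  -- steps traversing the entering edge of `a` change the potential by ±1
  have hcross1 : ∀ a s, a ∈ N → a ≠ 0 → E s = E (a-1) →
      RPchi i a (s+1) - RPchi i a s = 1 ∨ RPchi i a (s+1) - RPchi i a s = -1 := by
    intro a s haN ha0 hEs
    have hanc : RPanc i a a := RPanc_refl i a
    have hnanc : ¬ RPanc i a (RPpar i a) := RPnot_anc_par i ha0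
    rcases hendp s a haN ha0 hEs with ⟨h1, h2⟩ | ⟨h1, h2⟩
    · left; unfold RPchi; rw [h1, h2, if_pos hanc, if_neg hnanc]; ring
    · right; unfold RPchi; rw [h1, h2, if_neg hnanc, if_pos hanc]; ring
  -- every second-half step has a first-half partner with the same spun edge
  have hpartner : ∀ t, m ≤ t → t < 2*m → ∃ s, s < m ∧ E s = E t := by
    intro t hmt ht
    obtain ⟨a, haN, ha0, hEa⟩ := hsurj t ht
    have ha2m : a < 2*m := ((hmemN a).mp haN).1
    have hC : ((Finset.range (2*m)).filter fun k => E k = E (a-1)).card = 2 :=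
      hD (a-1) (Finset.mem_range.mpr (by omega))
    obtain ⟨s1, s2, hs12, hCeq⟩ := Finset.card_eq_two.mp hC
    have htel : ∑ s ∈ Finset.range (2*m), (RPchi i a (s+1) - RPchi i a s) = 0 := by
      rw [Finset.sum_range_sub (fun s => RPchi i a s)]
      rw [RPchi_congr a hclosed]
      exact sub_self _
    have hsplit := Finset.sum_filter_add_sum_filter_not (Finset.range (2*m))
      (fun k => E k = E (a-1)) (fun s => RPchi i a (s+1) - RPchi i a s)
    have hnot : ∑ s ∈ (Finset.range (2*m)).filter (fun k => ¬ (E k = E (a-1))),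
        (RPchi i a (s+1) - RPchi i a s) = 0 := by
      apply Finset.sum_eq_zero
      intro s hs
      rw [Finset.mem_filter, Finset.mem_range] at hs
      exact hcross0 a s haN ha0 hs.1 hs.2
    have hCsum : (RPchi i a (s1+1) - RPchi i a s1) + (RPchi i a (s2+1) - RPchi i a s2) = 0 := by
      have hCsum' : ∑ s ∈ ({s1, s2} : Finset ℕ), (RPchi i a (s+1) - RPchi i a s) = 0 := by
        rw [← hCeq]
        linarith [hsplit, hnot, htel]
      rwa [Finset.sum_pair hs12] at hCsum'
    have hs1C : s1 ∈ (Finset.range (2*m)).filter (fun k => E k = E (a-1)) := by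
      rw [hCeq]; simp
    have hs2C : s2 ∈ (Finset.range (2*m)).filter (fun k => E k = E (a-1)) := by
      rw [hCeq]; simp
    rw [Finset.mem_filter, Finset.mem_range] at hs1C hs2C
    have ht1 := hcross1 a s1 haN ha0 hs1C.2
    have ht2 := hcross1 a s2 haN ha0 hs2C.2
    have hkey : ∀ u v : ℕ, E u = E v → ((u < m ∧ v < m) ∨ (m ≤ u ∧ m ≤ v)) →
        RPchi i a (u+1) - RPchi i a u = RPchi i a (v+1) - RPchi i a v := by
      intro u v huv hcase
      rcases hcase with ⟨hu, hv⟩ | ⟨hu, hv⟩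
      · rw [hElt u hu, hElt v hv, Prod.mk.injEq] at huv
        rw [RPchi_congr a huv.1, RPchi_congr a huv.2]
      · rw [hEge u hu, hEge v hv, Prod.mk.injEq] at huv
        rw [RPchi_congr a huv.2, RPchi_congr a huv.1]
    have htmem : t = s1 ∨ t = s2 := by
      have hmem : t ∈ ({s1, s2} : Finset ℕ) := by
        rw [← hCeq, Finset.mem_filter]
        exact ⟨Finset.mem_range.mpr ht, hEa.symm⟩
      simpa using hmem
    rcases htmem with rfl | rfl
    · refine ⟨s2, ?_, hs2C.2.trans hs1C.2.symm⟩
      by_contra hge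
      push_neg at hge
      have := hkey t s2 (hs1C.2.trans hs2C.2.symm) (Or.inr ⟨hmt, hge⟩)
      rcases ht1 with h | h <;> rcases ht2 with h' | h' <;> linarith
    · refine ⟨s1, ?_, hs1C.2.trans hs2C.2.symm⟩
      by_contra hge
      push_neg at hge
      have := hkey s1 t (hs1C.2.trans hs2C.2.symm) (Or.inr ⟨hge, hmt⟩)
      rcases ht1 with h | h <;> rcases ht2 with h' | h' <;> linarith
  -- all first visits happen in the first half
  have hNle : ∀ k, k ∈ N → k ≤ m := by
    intro k hkN
    by_contra hgt
    push_neg at hgt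
    obtain ⟨hk2m, hfvk⟩ := (hmemN k).mp hkN
    obtain ⟨s, hsm, hEs⟩ := hpartner (k-1) (by omega) (by omega)
    rw [hElt s hsm, hEge (k-1) (by omega), Prod.mk.injEq] at hEs
    rw [show k - 1 + 1 = k by omega] at hEs
    have := RPfv_min hEs.1
    omega
  have hNeq : N = Finset.range (m+1) := by
    apply Finset.eq_of_subset_of_card_le
    · intro k hk
      exact Finset.mem_range.mpr (by have := hNle k hk; omega)
    · rw [hNcard, Finset.card_range]
  -- injectivity on the first half
  have hinj : ∀ k l, k ≤ m → l ≤ m → i k = i l → k = l := by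
    intro k l hk hl h
    have hk' : k ∈ N := by rw [hNeq]; exact Finset.mem_range.mpr (by omega)
    have hl' : l ∈ N := by rw [hNeq]; exact Finset.mem_range.mpr (by omega)
    have h1 := ((hmemN k).mp hk').2
    have h2 := ((hmemN l).mp hl').2
    have := RPfv_congr h
    omega
  -- reflection identity
  have hrefl : ∀ k, k ≤ m → i (2*m - k) = i k := by
    intro k
    induction k with
    | zero => intro _; simpa using hclosed
    | succ k ih =>
      intro hk1
      have ihk := ih (by omega)
      obtain ⟨s, hsm, hEs⟩ := hpartner (2*m - k - 1) (by omega) (by omega)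
      rw [hElt s hsm, hEge (2*m - k - 1) (by omega), Prod.mk.injEq] at hEs
      rw [show 2*m - k - 1 + 1 = 2*m - k by omega] at hEs
      have hsk : s = k := hinj s k (by omega) (by omega) (hEs.1.trans ihk)
      rw [show 2*m - (k+1) = 2*m - k - 1 by omega, ← hEs.2, hsk]
  -- conclusion
  intro k l hk hl
  constructor
  · intro h
    have hnorm : ∀ t, t ≤ 2*m → ∃ t', t' ≤ m ∧ i t' = i t ∧ (t' = t ∨ t' + t = 2*m) := by
      intro t ht
      rcases le_or_gt t m with h1 | h1
      · exact ⟨t, h1, rfl, Or.inl rfl⟩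
      · refine ⟨2*m - t, by omega, ?_, Or.inr (by omega)⟩
        have h2 := hrefl (2*m - t) (by omega)
        rw [show 2*m - (2*m - t) = t by omega] at h2
        exact h2.symm
    obtain ⟨k', hk'm, hk'i, hk'⟩ := hnorm k hk
    obtain ⟨l', hl'm, hl'i, hl'⟩ := hnorm l hl
    have := hinj k' l' hk'm hl'm (hk'i.trans (h.trans hl'i.symm))
    omega
  · rintro (rfl | hsum)
    · rfl
    · rcases le_or_gt k m with h1 | h1
      · have h2 := hrefl k h1
        rw [show 2*m - k = l by omega] at h2
        exact h2.symm
      · have h2 := hrefl l (by omega)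
        rw [show 2*m - l = k by omega] at h2
        exact h2
end

section
/- If ξ has S-transform S(z) = 1/(1+z)^m at the level of formal power series (equivalently, its moment generating function 𝓜 satisfies 𝓜(x) = 1 + x𝓜(x)^{m+1}), then the moments of ξ are the Fuss–Catalan numbers M_p^(m) = C(mp+p, p)/(mp+1). -/
noncomputable def fcg (m j p : ℕ) : ℚ :=
  (j : ℚ) * (((m+1)*p + j).choose p : ℚ) / (((m+1)*p + j : ℕ) : ℚ)

lemma fcg_zero (m p : ℕ) : fcg m 0 p = 0 := by simp [fcg]

lemma fcg_base (m j : ℕ) : fcg m (j+1) 0 = 1 := by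
  simp only [fcg, Nat.mul_zero, Nat.zero_add, Nat.choose_zero_right, Nat.cast_one, mul_one]
  rw [div_self]
  exact Nat.cast_ne_zero.mpr (by omega)

lemma fcg_rec (m i q : ℕ) :
    fcg m (i+1) (q+1) = fcg m i (q+1) + fcg m (m+i+1) q := by
  have hd : ((m+1)*(q+1) + i : ℕ) - q = m*q+m+1+i := by
    have h : (m+1)*(q+1) = m*q+m+q+1 := by ring
    omega
  have hb := Nat.choose_succ_right_eq ((m+1)*(q+1)+i) q
  rw [hd] at hb
  have hbq : ((((m+1)*(q+1)+i).choose (q+1) : ℕ) : ℚ) * ((q:ℚ)+1)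
      = ((((m+1)*(q+1)+i).choose q : ℕ) : ℚ) * ((m:ℚ)*q+m+1+i) := by
    exact_mod_cast congrArg (Nat.cast (R := ℚ)) hb
  have pascal : ((m+1)*(q+1)+(i+1)).choose (q+1)
      = ((m+1)*(q+1)+i).choose q + ((m+1)*(q+1)+i).choose (q+1) := by
    rw [show (m+1)*(q+1)+(i+1) = ((m+1)*(q+1)+i)+1 from by ring]
    exact Nat.choose_succ_succ _ _
  have hN0 : (((m+1)*(q+1)+i : ℕ) : ℚ) ≠ 0 := Nat.cast_ne_zero.mpr (by positivity)
  have hN10 : (((m+1)*(q+1)+(i+1) : ℕ) : ℚ) ≠ 0 := Nat.cast_ne_zero.mpr (by positivity)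
  simp only [fcg, pascal, show (m+1)*q + (m+i+1) = (m+1)*(q+1) + i from by ring]
  rw [← add_div, div_eq_div_iff hN10 hN0]
  set a : ℚ := ((((m+1)*(q+1)+i).choose q : ℕ) : ℚ) with ha
  set b : ℚ := ((((m+1)*(q+1)+i).choose (q+1) : ℕ) : ℚ) with hbdef
  push_cast
  linear_combination ((m:ℚ)+1) * hbq

/-- Uniqueness: if a formal power series `𝓜` over `ℚ` has constant coefficient `1` and
satisfies the functional equation `𝓜 = 1 + X·𝓜^(m+1)` (equivalently, the associated
`S`-transform is `1/(1+z)^m`), then its coefficients — the moments — are the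
Fuss–Catalan numbers `M_p^(m) = C(mp+p, p)/(mp+1)`. -/
theorem moments_of_S_transform (m : ℕ) (hm : 1 ≤ m) (M : PowerSeries ℚ)
    (h0 : PowerSeries.constantCoeff M = 1)
    (hfe : M = 1 + PowerSeries.X * M ^ (m + 1)) :
    ∀ p : ℕ, PowerSeries.coeff p M =
      ((Nat.choose (m * p + p) p / (m * p + 1) : ℕ) : ℚ) := by
  have hbase : ∀ j : ℕ, PowerSeries.coeff 0 (M ^ (j+1)) = 1 := by
    intro j
    simp [PowerSeries.coeff_zero_eq_constantCoeff, map_pow, h0]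
  have hrec : ∀ j p : ℕ, PowerSeries.coeff (p+1) (M ^ (j+1)) =
      PowerSeries.coeff (p+1) (M ^ j) + PowerSeries.coeff p (M ^ (m+j+1)) := by
    intro j p
    have key : M ^ (j+1) = M ^ j + PowerSeries.X * M ^ (m+j+1) := by
      calc M ^ (j+1) = M ^ j * (1 + PowerSeries.X * M ^ (m+1)) := by rw [← hfe, pow_succ]
        _ = M ^ j + PowerSeries.X * M ^ (m+j+1) := by ring
    rw [key, map_add, PowerSeries.coeff_succ_X_mul]
  have key : ∀ p j : ℕ, PowerSeries.coeff p (M ^ (j+1)) = fcg m (j+1) p := by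
    intro p
    induction p with
    | zero => intro j; rw [hbase, fcg_base]
    | succ p ih =>
      intro j
      induction j with
      | zero =>
        rw [hrec 0 p, pow_zero, ih m]
        simp only [PowerSeries.coeff_one, Nat.succ_ne_zero, if_false, zero_add]
        rw [show fcg m 1 (p+1) = fcg m 0 (p+1) + fcg m (m+0+1) p from fcg_rec m 0 p,
          fcg_zero, zero_add]
      | succ i ihj =>
        rw [hrec (i+1) p, ihj, show m+(i+1)+1 = m+i+1+1 from by omega, ih (m+i+1)]
        exact (fcg_rec m (i+1) p).symm
  intro p
  have hM := key p 0
  rw [pow_one] at hM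
  rw [hM]
  -- now prove fcg m 1 p = cast of nat division
  have hdvd : (m*p+1) ∣ (m*p+p).choose p := by
    rcases p with _ | q
    · simp
    · have hd : (m*(q+1)+(q+1)) - q = m*(q+1)+1 := by
        have : m*(q+1) = m*q+m := by ring
        omega
      have hb := Nat.choose_succ_right_eq (m*(q+1)+(q+1)) q
      rw [hd] at hb
      have hcop : Nat.Coprime (m*(q+1)+1) (q+1) := by
        simpa [Nat.add_comm] using (Nat.coprime_one_left (q+1)).add_mul_left_left m
      exact hcop.dvd_of_dvd_mul_right ⟨(m*(q+1)+(q+1)).choose q, by rw [hb, Nat.mul_comm]⟩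
  rw [Nat.cast_div hdvd (Nat.cast_ne_zero.mpr (by omega))]
  have hc := Nat.choose_mul_succ_eq (m*p+p) p
  rw [show m*p+p+1-p = m*p+1 from by omega] at hc
  have hcq : (((m*p+p).choose p : ℕ) : ℚ) * ((m:ℚ)*p+p+1)
      = (((m*p+p+1).choose p : ℕ) : ℚ) * ((m:ℚ)*p+1) := by
    exact_mod_cast congrArg (Nat.cast (R := ℚ)) hc
  simp only [fcg, show (m+1)*p+1 = m*p+p+1 from by ring, Nat.cast_one, one_mul]
  rw [div_eq_div_iff (Nat.cast_ne_zero.mpr (by omega)) (Nat.cast_ne_zero.mpr (by omega))]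
  push_cast
  linear_combination (-1 : ℚ) * hcq
end

section
/- In an (m,p)-regular path, only indices of the same type can be equal: if i_j = i_k then type(j) = type(k), where the type of position j is j mod 2m if j mod 2m ∈ {0,...,m−1} and 2m − (j mod 2m) otherwise. -/
open Finset

namespace EqIdxAux

/-- spun edge at step j -/
def spun (m : ℕ) (i : ℕ → ℕ) (j : ℕ) : ℕ × ℕ :=
  if j % (2 * m) < m then (i j, i (j + 1)) else (i (j + 1), i j)

/-- undirected edge at step j -/
def ue (i : ℕ → ℕ) (j : ℕ) : Sym2 ℕ := s(i j, i (j + 1))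

/-- height of position j -/
def hgt (m : ℕ) (j : ℕ) : ℤ :=
  ∑ l ∈ range j, (if l % (2 * m) < m then (1 : ℤ) else -1)

/-- vertices visited up to time t -/
def W (i : ℕ → ℕ) (t : ℕ) : Finset ℕ := (range (t + 1)).image i

/-- non-loop undirected edges used before time t -/
def E (i : ℕ → ℕ) (t : ℕ) : Finset (Sym2 ℕ) :=
  ((range t).filter (fun l => i l ≠ i (l + 1))).image (ue i)

lemma W_mono (i : ℕ → ℕ) {t t' : ℕ} (h : t ≤ t') : W i t ⊆ W i t' :=
  Finset.image_subset_image (Finset.range_subset_range.2 (by omega))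

lemma E_mono (i : ℕ → ℕ) {t t' : ℕ} (h : t ≤ t') : E i t ⊆ E i t' :=
  Finset.image_subset_image (Finset.filter_subset_filter _ (Finset.range_subset_range.2 h))

lemma mem_W (i : ℕ → ℕ) {j t : ℕ} (h : j ≤ t) : i j ∈ W i t :=
  Finset.mem_image_of_mem _ (Finset.mem_range.2 (by omega))

lemma W_succ (i : ℕ → ℕ) (t : ℕ) : W i (t + 1) = insert (i (t + 1)) (W i t) := by
  rw [W, range_add_one, image_insert]; rfl

lemma E_succ (i : ℕ → ℕ) {t : ℕ} (h : i t ≠ i (t + 1)) :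
    E i (t + 1) = insert (ue i t) (E i t) := by
  rw [E, range_add_one, filter_insert, if_pos h, image_insert]; rfl

lemma new_vertex (i : ℕ → ℕ) {t : ℕ} (h : i (t + 1) ∉ W i t) :
    (W i (t + 1)).card ≤ (W i t).card + 1 ∧ (E i (t + 1)).card = (E i t).card + 1 := by
  have hnl : i t ≠ i (t + 1) := fun he => h (he ▸ mem_W i (le_refl t))
  have hue : ue i t ∉ E i t := by
    intro hmem
    obtain ⟨l, hl, hlue⟩ := Finset.mem_image.1 hmem
    obtain ⟨hl1, hl2⟩ := Finset.mem_filter.1 hl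
    have hlt := Finset.mem_range.1 hl1
    rw [ue, ue, Sym2.eq_iff] at hlue
    rcases hlue with ⟨_, h2⟩ | ⟨h1, _⟩
    · exact h (h2 ▸ mem_W i (show l + 1 ≤ t by omega))
    · exact h (h1 ▸ mem_W i (show l ≤ t by omega))
  constructor
  · rw [W_succ]; exact (Finset.card_insert_le _ _)
  · rw [E_succ i hnl, Finset.card_insert_of_notMem hue]

lemma card_W_le (i : ℕ → ℕ) : ∀ t, (W i t).card ≤ (E i t).card + 1 := by
  intro t
  induction t with
  | zero => simp [W, E]
  | succ t ih =>
    by_cases h : i (t + 1) ∈ W i t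
    · have hW : W i (t + 1) = W i t := by rw [W_succ, Finset.insert_eq_self.2 h]
      have h2 : (E i t).card ≤ (E i (t + 1)).card :=
        Finset.card_le_card (E_mono i (Nat.le_succ t))
      rw [hW]; omega
    · obtain ⟨h1, h2⟩ := new_vertex i h
      omega

lemma bad_step (i : ℕ → ℕ) (t0 : ℕ) (h1 : i (t0 + 1) ∈ W i t0) (h2 : i t0 ≠ i (t0 + 1))
    (h3 : ue i t0 ∉ E i t0) : ∀ t, t0 + 1 ≤ t → (W i t).card ≤ (E i t).card := by
  intro t ht
  induction t, ht using Nat.le_induction with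
  | base =>
    have hW : W i (t0 + 1) = W i t0 := by rw [W_succ, Finset.insert_eq_self.2 h1]
    rw [hW, E_succ i h2, Finset.card_insert_of_notMem h3]
    exact card_W_le i t0
  | succ n hn ih =>
    by_cases h : i (n + 1) ∈ W i n
    · have hW : W i (n + 1) = W i n := by rw [W_succ, Finset.insert_eq_self.2 h]
      rw [hW]
      exact ih.trans (Finset.card_le_card (E_mono i (Nat.le_succ n)))
    · obtain ⟨ha, hb⟩ := new_vertex i h
      omega

lemma hgt_succ (m t : ℕ) :
    hgt m (t + 1) = hgt m t + (if t % (2 * m) < m then (1 : ℤ) else -1) :=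
  Finset.sum_range_succ _ t

lemma hgt_formula (m : ℕ) (hm : 1 ≤ m) : ∀ j, hgt m j =
    if j % (2 * m) < m then ((j % (2 * m) : ℕ) : ℤ)
    else ((2 * m : ℕ) : ℤ) - ((j % (2 * m) : ℕ) : ℤ) := by
  intro j
  induction j with
  | zero =>
    rw [hgt]
    simp only [Finset.range_zero, Finset.sum_empty, Nat.zero_mod]
    simp only [show (0:ℕ) < m by omega, if_true]
    simp
  | succ j ih =>
    have hr : j % (2 * m) < 2 * m := Nat.mod_lt _ (by omega)
    have hmod : (j + 1) % (2 * m) = if j % (2 * m) + 1 = 2 * m then 0 else j % (2 * m) + 1 := by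
      rw [Nat.add_mod, Nat.mod_eq_of_lt (show 1 < 2 * m by omega)]
      split_ifs with h
      · rw [h, Nat.mod_self]
      · exact Nat.mod_eq_of_lt (by omega)
    rw [hgt_succ, ih, hmod]
    by_cases h2 : j % (2 * m) + 1 = 2 * m
    · rw [if_pos h2]; split_ifs <;> omega
    · rw [if_neg h2]; split_ifs <;> omega

end EqIdxAux

open EqIdxAux in
/-- In an `(m,p)`-regular path only indices of the same type can be equal:
if `i_j = i_k` then `type(j) = type(k)`, where the type of position `j` is
`j mod 2m` if `j mod 2m < m` and `2m − (j mod 2m)` otherwise. -/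
theorem equal_indices_same_type (m p : ℕ) (hm : 1 ≤ m) (hp : 1 ≤ p) (i : ℕ → ℕ)
    (hclosed : i (2 * m * p) = i 0)
    (hdist : ((Finset.range (2 * m * p)).image i).card = m * p + 1)
    (hdouble : ∀ j ∈ Finset.range (2 * m * p),
      ((Finset.range (2 * m * p)).filter fun k =>
        (if k % (2 * m) < m then (i k, i (k + 1)) else (i (k + 1), i k)) =
          (if j % (2 * m) < m then (i j, i (j + 1)) else (i (j + 1), i j))).card = 2) :
    ∀ j k : ℕ, j < 2 * m * p → k < 2 * m * p → i j = i k →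
      (if j % (2 * m) < m then j % (2 * m) else 2 * m - j % (2 * m)) =
        (if k % (2 * m) < m then k % (2 * m) else 2 * m - k % (2 * m)) := by
  intro j k hj hk hij
  set N := 2 * m * p with hNdef
  have hmp : 1 * 1 ≤ m * p := Nat.mul_le_mul hm hp
  have hN2 : N = 2 * (m * p) := by rw [hNdef]; ring
  have hN : 2 ≤ N := by omega
  -- distinct spun edges
  set S := (Finset.range N).image (spun m i) with hSdef
  have hSfib : ∀ b ∈ S, ((Finset.range N).filter fun x => spun m i x = b).card = 2 := by
    intro b hb
    obtain ⟨j', hj', rfl⟩ := Finset.mem_image.1 hb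
    have h := hdouble j' hj'
    simp only [spun]
    exact h
  have hScard : S.card = m * p := by
    have h1 := Finset.card_eq_sum_card_fiberwise
      (f := spun m i) (s := Finset.range N) (t := S)
      (fun x hx => Finset.mem_image_of_mem _ hx)
    rw [Finset.card_range, Finset.sum_congr rfl hSfib, Finset.sum_const, smul_eq_mul,
      mul_comm] at h1
    omega
  -- undirected edges
  have hq : ∀ l, Sym2.mk.uncurry (spun m i l) = ue i l := by
    intro l
    rw [spun, ue]
    split
    · rfl
    · exact Sym2.eq_swap
  set U := (Finset.range N).image (ue i) with hUdef
  have hUS : U = S.image Sym2.mk.uncurry := by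
    rw [hSdef, Finset.image_image, hUdef]
    apply Finset.image_congr
    intro x _
    exact (hq x).symm
  have hUle : U.card ≤ S.card := by rw [hUS]; exact Finset.card_image_le
  have hWV : (W i (N - 1)).card = m * p + 1 := by
    have : N - 1 + 1 = N := by omega
    rw [W, this]
    exact hdist
  have hEU : ∀ t, t ≤ N → E i t ⊆ U :=
    fun t ht => Finset.image_subset_image
      ((Finset.filter_subset _ _).trans (Finset.range_subset_range.2 ht))
  have hElow : m * p ≤ (E i (N - 1)).card := by
    have := card_W_le i (N - 1)
    omega
  have hEcardN : m * p ≤ (E i N).card :=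
    hElow.trans (Finset.card_le_card (E_mono i (by omega)))
  have hUcard : U.card = m * p :=
    le_antisymm (hUle.trans_eq hScard)
      (hEcardN.trans (Finset.card_le_card (hEU N le_rfl)))
  -- no bad steps
  have hgood : ∀ t, t < N → i (t + 1) ∈ W i t → i t ≠ i (t + 1) → ue i t ∈ E i t := by
    intro t ht h1 h2
    by_contra h3
    have hle := bad_step i t h1 h2 h3 N (by omega)
    have hWm : (W i (N - 1)).card ≤ (W i N).card := Finset.card_le_card (W_mono i (by omega))
    have hEm : (E i N).card ≤ m * p :=
      (Finset.card_le_card (hEU N le_rfl)).trans_eq hUcard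
    omega
  -- no loops
  have hnl : ∀ t, t < N → i t ≠ i (t + 1) := by
    intro t ht he
    have hmemU : ue i t ∈ U := Finset.mem_image_of_mem _ (Finset.mem_range.2 ht)
    have hnotE : ue i t ∉ E i N := by
      intro hmem
      obtain ⟨l, hl, hlue⟩ := Finset.mem_image.1 hmem
      obtain ⟨hl1, hl2⟩ := Finset.mem_filter.1 hl
      rw [ue, ue, ← he, Sym2.eq_iff] at hlue
      rcases hlue with ⟨ha, hb⟩ | ⟨ha, hb⟩ <;> exact hl2 (ha.trans hb.symm)
    have hss : E i N ⊂ U := (Finset.ssubset_iff_of_subset (hEU N le_rfl)).2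
      ⟨ue i t, hmemU, hnotE⟩
    have := Finset.card_lt_card hss
    omega
  -- Sym2.mk is injective on S
  have hUScard : (S.image Sym2.mk.uncurry).card = S.card := by rw [← hUS, hUcard, hScard]
  have hinjOn : Set.InjOn Sym2.mk.uncurry (S : Set (ℕ × ℕ)) := Finset.card_image_iff.1 hUScard
  have hinj : ∀ a b, a < N → b < N → ue i a = ue i b → spun m i a = spun m i b := by
    intro a b ha hb hab
    refine hinjOn ?_ ?_ ?_
    · exact Finset.mem_coe.2 (Finset.mem_image_of_mem _ (Finset.mem_range.2 ha))
    · exact Finset.mem_coe.2 (Finset.mem_image_of_mem _ (Finset.mem_range.2 hb))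
    · rw [hq, hq]; exact hab
  -- increments
  have hstep : ∀ a b, a < N → b < N → ue i a = ue i b →
      (i a = i b ∧ i (a + 1) = i (b + 1) ∧
        (if a % (2 * m) < m then (1 : ℤ) else -1) = (if b % (2 * m) < m then (1 : ℤ) else -1)) ∨
      (i a = i (b + 1) ∧ i (a + 1) = i b ∧
        (if a % (2 * m) < m then (1 : ℤ) else -1) =
          -(if b % (2 * m) < m then (1 : ℤ) else -1)) := by
    intro a b ha hb hab
    have h := hinj a b ha hb hab
    rw [spun, spun] at h
    by_cases h1 : a % (2 * m) < m <;> by_cases h2 : b % (2 * m) < m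
    · rw [if_pos h1, if_pos h2] at h
      exact Or.inl ⟨congrArg Prod.fst h, congrArg Prod.snd h, by norm_num [h1, h2]⟩
    · rw [if_pos h1, if_neg h2] at h
      exact Or.inr ⟨congrArg Prod.fst h, congrArg Prod.snd h,
        by norm_num [h1, h2]⟩
    · rw [if_neg h1, if_pos h2] at h
      exact Or.inr ⟨(congrArg Prod.snd h), (congrArg Prod.fst h),
        by norm_num [h1, h2]⟩
    · rw [if_neg h1, if_neg h2] at h
      exact Or.inl ⟨(congrArg Prod.snd h), (congrArg Prod.fst h),
        by norm_num [h1, h2]⟩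
  -- main induction
  have key : ∀ t, t ≤ N - 1 → ∀ a, a ≤ t → ∀ b, b ≤ t → i a = i b → hgt m a = hgt m b := by
    intro t
    induction t with
    | zero =>
      intro _ a ha b hb _
      have : a = 0 := by omega
      have hb0 : b = 0 := by omega
      rw [this, hb0]
    | succ t ih =>
      intro hts
      have iht := ih (by omega)
      have claim : ∀ a, a ≤ t → i a = i (t + 1) → hgt m a = hgt m (t + 1) := by
        intro a ha hab
        have htN : t < N := by omega
        have h1 : i (t + 1) ∈ W i t := by rw [← hab]; exact mem_W i ha
        have h2 := hnl t htN
        have h3 := hgood t htN h1 h2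
        obtain ⟨l, hl, hlue⟩ := Finset.mem_image.1 h3
        obtain ⟨hl1, hl2⟩ := Finset.mem_filter.1 hl
        have hlt : l < t := Finset.mem_range.1 hl1
        have hlN : l < N := by omega
        rcases hstep l t hlN htN hlue with ⟨e1, e2, e3⟩ | ⟨e1, e2, e3⟩
        · have g1 : hgt m a = hgt m (l + 1) := iht a ha (l + 1) (by omega) (by rw [hab, ← e2])
          have g2 : hgt m l = hgt m t := iht l (by omega) t le_rfl e1
          rw [g1, hgt_succ, hgt_succ, g2, e3]
        · have g1 : hgt m a = hgt m l := iht a ha l (by omega) (by rw [hab, e1])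
          have g2 : hgt m (l + 1) = hgt m t := iht (l + 1) (by omega) t le_rfl e2
          have h4 := hgt_succ m l
          have h5 := hgt_succ m t
          rw [g1, h5]
          rw [h4, e3] at g2
          linarith
      intro a ha b hb hab
      by_cases ha' : a = t + 1 <;> by_cases hb' : b = t + 1
      · rw [ha', hb']
      · rw [ha'] at hab ⊢
        exact (claim b (by omega) hab.symm).symm
      · rw [hb'] at hab ⊢
        exact claim a (by omega) hab
      · exact iht a (by omega) b (by omega) hab
  have hfin : hgt m j = hgt m k := key (N - 1) le_rfl j (by omega) k (by omega) hij
  rw [hgt_formula m hm j, hgt_formula m hm k] at hfin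
  have haj : j % (2 * m) < 2 * m := Nat.mod_lt _ (by omega)
  have hak : k % (2 * m) < 2 * m := Nat.mod_lt _ (by omega)
  split_ifs at hfin ⊢ <;> omega
end
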